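/- Let n ≥ 2, let λ, ν ∈ ℂ with ν − λ a nonnegative integer, and let 1 ≤ p ≤ n−1. Then x_p²·𝒦_{λ−1,ν+1} = 4 ∂_p² 𝒦_{λ+1,ν−1} + 2 𝒦_{λ,ν} as tempered distributions on ℝ^n. -/

import Mathlib

/-- Partial derivative ∂_p of a complex-valued function on ℝ^n. -/
noncomputable def pd {n : ℕ} (p : Fin n) (f : (Fin n → ℝ) → ℂ) : (Fin n → ℝ) → ℂ :=
  fun x => fderiv ℝ f x (Pi.single p 1)

/-- Δ' = ∂_1² + ⋯ + ∂_{n−1}², the Laplacian in the first n−1 variables on ℝ^n. -/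
noncomputable def lapP {n : ℕ} (f : (Fin n → ℝ) → ℂ) : (Fin n → ℝ) → ℂ :=
  fun x => ∑ j ∈ Finset.univ.filter (fun j : Fin n => (j : ℕ) < n - 1), pd j (pd j f) x

/-- ∂_n, the partial derivative in the last variable on ℝ^n. -/
noncomputable def pdLast {n : ℕ} (f : (Fin n → ℝ) → ℂ) : (Fin n → ℝ) → ℂ :=
  if h : 0 < n then pd ⟨n - 1, by omega⟩ f else 0

/-- The coefficient of z^{l−2k} in the renormalized Gegenbauer polynomial
C̃_l^α(z) = Σ_{k=0}^{⌊l/2⌋} (−1)^k (∏_{m=⌊(l+1)/2⌋}^{l−k−1}(α+m)) (2z)^{l−2k}/(k!(l−2k)!). -/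
noncomputable def gegenCoeff (α : ℂ) (l k : ℕ) : ℂ :=
  (-1 : ℂ) ^ k * (∏ m ∈ Finset.Ico ((l + 1) / 2) (l - k), (α + (m : ℂ))) *
    2 ^ (l - 2 * k) / ((Nat.factorial k : ℂ) * (Nat.factorial (l - 2 * k) : ℂ))

/-- The action on a test function `φ` of the tempered distribution
`𝒦_{λ,ν} = Σ_{k=0}^{⌊l/2⌋} a_k (−1)^k (Δ')^k ∂_n^{l−2k} δ` on ℝ^n, where `l = ν − λ`
and `a_k` are the coefficients of `C̃_l^{λ−(n−1)/2}`; each `∂` contributes a sign `−1`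
and δ evaluates at 0.  By convention `𝒦_{λ,ν} = 0` when `l < 0`. -/
noncomputable def Kact (n : ℕ) (lam : ℂ) (l : ℤ) (φ : (Fin n → ℝ) → ℂ) : ℂ :=
  if 0 ≤ l then
    ∑ k ∈ Finset.range (l.toNat / 2 + 1),
      gegenCoeff (lam - ((n : ℂ) - 1) / 2) l.toNat k *
        ((-1 : ℂ) ^ k * ((-1 : ℂ) ^ (l.toNat - 2 * k) *
          (pdLast (n := n))^[l.toNat - 2 * k] ((lapP (n := n))^[k] φ) 0))
  else 0

/-- γ(μ, a) := 1 if a is odd, μ + a/2 if a is even. -/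
noncomputable def gam (mu : ℂ) (a : ℕ) : ℂ := if a % 2 = 1 then 1 else mu + ((a / 2 : ℕ) : ℂ)

/-!
Realise `∂_j`, `Δ'` and multiplication by `x_p` as operators on Schwartz space. For `p < n - 1`
they satisfy `[∂_p, x_p] = 1`, `[Δ', x_p] = 2 ∂_p`, `[Δ', ∂_p] = 0`, and `∂_n` commutes with `x_p`,
so that in the operator algebra
`Δ'^k x_p² = x_p² Δ'^k + 4k x_p ∂_p Δ'^(k-1) + 2k Δ'^(k-1) + 4k(k-1) Δ'^(k-2) ∂_p²`.
After applying `∂_n^m` and evaluating at `0` the terms starting with `x_p` vanish, so the `k`-th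
term of `𝒦_{λ-1,ν+1}(x_p² φ)` is a multiple of the `(k-1)`-st term of `𝒦_{λ,ν}(φ)` plus a
multiple of the `(k-2)`-nd term of `𝒦_{λ+1,ν-1}(∂_p² φ)`. Two index-shift identities for the
coefficients of `C̃_l^α` turn these multiples into the constants `2` and `4`.
-/

open SchwartzMap LineDeriv
open scoped SchwartzMap

section Commutators

variable {R : Type*} [Ring R] {X C D L : R}

theorem pow_mul_eq_mul_pow_add_of_commute (hLX : L * X = X * L + C) (hLC : Commute L C) (k : ℕ) :
    L ^ k * X = X * L ^ k + k • (C * L ^ (k - 1)) := by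
  induction k with
  | zero => simp
  | succ k ih =>
    rw [pow_succ', mul_assoc, ih, mul_add, ← mul_assoc, hLX, mul_smul_comm, ← mul_assoc,
      hLC.eq]
    rcases k with _ | k
    · simp
    · simp only [Nat.add_sub_cancel, pow_succ', succ_nsmul]; noncomm_ring

theorem pow_mul_sq_eq_of_commutators (hDX : D * X = X * D + 1) (hLX : L * X = X * L + 2 • D)
    (hLD : Commute L D) (k : ℕ) :
    L ^ k * X ^ 2 = X ^ 2 * L ^ k + (4 * k) • (X * D * L ^ (k - 1)) + (2 * k) • L ^ (k - 1)
      + (4 * k * (k - 1)) • (L ^ (k - 2) * D ^ 2) := by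
  have hLC : Commute L (2 • D) := hLD.smul_right 2
  have hDX' (y : R) : D * (X * y) = X * (D * y) + y := by rw [← mul_assoc, hDX]; noncomm_ring
  have hDL : D * (D * L ^ (k - 1 - 1)) = L ^ (k - 2) * D ^ 2 := by
    rw [← mul_assoc, ← sq, ((hLD.pow_right 2).pow_left _).eq]; rfl
  have hpow := pow_mul_eq_mul_pow_add_of_commute hLX hLC
  rw [sq X, ← mul_assoc, hpow]
  simp only [add_mul, smul_mul_assoc, mul_assoc, hpow, mul_add, mul_smul_comm, hDX', hDL,
    smul_add, smul_smul]
  module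

end Commutators

namespace SchwartzMap

variable {E F : Type*} [NormedAddCommGroup E] [NormedSpace ℝ E] [NormedAddCommGroup F]

theorem lineDerivOp_comm [NormedSpace ℝ F] (v w : E) (f : 𝓢(E, F)) :
    ∂_{v} (∂_{w} f) = ∂_{w} (∂_{v} f) := by
  have hsnd (u u' x : E) : ∂_{u} (∂_{u'} f) x = fderiv ℝ (fderiv ℝ f) x u u' := by
    rw [lineDerivOp_apply_eq_fderiv]
    change fderiv ℝ (fun y => fderiv ℝ f y u') x u = _
    have hd : DifferentiableAt ℝ (fderiv ℝ f) x := (fderivCLM ℝ E F f).differentiableAt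
    rw [fderiv_clm_apply hd (differentiableAt_const u')]
    simp
  ext x
  rw [hsnd, hsnd]
  exact ((f.smooth 2).contDiffAt.isSymmSndFDerivAt (by simp)) v w

theorem lineDerivOp_smulLeftCLM [NormedSpace ℂ F] (ℓ : E →L[ℝ] ℂ) (v : E) (f : 𝓢(E, F)) :
    ∂_{v} (smulLeftCLM F ⇑ℓ f) = ℓ v • f + smulLeftCLM F ⇑ℓ (∂_{v} f) := by
  ext x
  rw [lineDerivOp_apply_eq_fderiv, smulLeftCLM_apply ℓ.hasTemperateGrowth,
    fderiv_fun_smul ℓ.differentiableAt f.differentiableAt]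
  simp [lineDerivOp_apply_eq_fderiv, ℓ.hasTemperateGrowth, add_comm]

end SchwartzMap

section Coordinates

variable {n : ℕ}

noncomputable def partialDerivCLM (q : Fin n) : 𝓢(Fin n → ℝ, ℂ) →L[ℂ] 𝓢(Fin n → ℝ, ℂ) :=
  lineDerivOpCLM ℂ 𝓢(Fin n → ℝ, ℂ) (Pi.single q 1 : Fin n → ℝ)

noncomputable def coordCLM (p : Fin n) : (Fin n → ℝ) →L[ℝ] ℂ :=
  Complex.ofRealCLM ∘L ContinuousLinearMap.proj p

noncomputable def coordSMulCLM (p : Fin n) : 𝓢(Fin n → ℝ, ℂ) →L[ℂ] 𝓢(Fin n → ℝ, ℂ) :=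
  smulLeftCLM ℂ ⇑(coordCLM p)

variable (n) in
noncomputable def partialLaplacianCLM : 𝓢(Fin n → ℝ, ℂ) →L[ℂ] 𝓢(Fin n → ℝ, ℂ) :=
  ∑ j ∈ Finset.univ.filter (fun j : Fin n => (j : ℕ) < n - 1), partialDerivCLM j * partialDerivCLM j

theorem coordSMulCLM_apply_apply (p : Fin n) (f : 𝓢(Fin n → ℝ, ℂ)) (x : Fin n → ℝ) :
    coordSMulCLM p f x = x p * f x := by
  rw [coordSMulCLM, smulLeftCLM_apply_apply (coordCLM p).hasTemperateGrowth]
  rfl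

theorem commute_partialDerivCLM (q r : Fin n) :
    Commute (partialDerivCLM q) (partialDerivCLM r) :=
  ContinuousLinearMap.ext fun f => lineDerivOp_comm _ _ f

theorem partialDerivCLM_mul_coordSMulCLM (q p : Fin n) :
    partialDerivCLM q * coordSMulCLM p
      = coordSMulCLM p * partialDerivCLM q + if q = p then 1 else 0 := by
  ext1 f
  simp only [mul_apply_eq_comp, add_apply, partialDerivCLM,
    coordSMulCLM, lineDerivOpCLM_apply, lineDerivOp_smulLeftCLM]
  split_ifs with h <;> simp [coordCLM, h, add_comm]

theorem partialDerivCLM_mul_coordSMulCLM_self (p : Fin n) :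
    partialDerivCLM p * coordSMulCLM p = coordSMulCLM p * partialDerivCLM p + 1 := by
  simpa using partialDerivCLM_mul_coordSMulCLM p p

theorem commute_partialDerivCLM_coordSMulCLM {q p : Fin n} (h : q ≠ p) :
    Commute (partialDerivCLM q) (coordSMulCLM p) := by
  simpa [Commute, SemiconjBy, h] using partialDerivCLM_mul_coordSMulCLM q p

theorem commute_partialLaplacianCLM_partialDerivCLM (q : Fin n) :
    Commute (partialLaplacianCLM n) (partialDerivCLM q) :=
  Commute.sum_left _ _ _ fun j _ =>
    ((commute_partialDerivCLM j q).mul_left (commute_partialDerivCLM j q))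

theorem partialLaplacianCLM_mul_coordSMulCLM {p : Fin n} (hp : (p : ℕ) < n - 1) :
    partialLaplacianCLM n * coordSMulCLM p
      = coordSMulCLM p * partialLaplacianCLM n + 2 • partialDerivCLM p := by
  have h (j : Fin n) : partialDerivCLM j * partialDerivCLM j * coordSMulCLM p
      = coordSMulCLM p * (partialDerivCLM j * partialDerivCLM j)
        + if p = j then 2 • partialDerivCLM p else 0 := by
    by_cases hpj : p = j
    · subst hpj
      rw [if_pos rfl, mul_assoc, partialDerivCLM_mul_coordSMulCLM_self, mul_add, ← mul_assoc,
        partialDerivCLM_mul_coordSMulCLM_self]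
      noncomm_ring
    · have hj := commute_partialDerivCLM_coordSMulCLM (Ne.symm hpj)
      rw [if_neg hpj, add_zero, (hj.mul_left hj).eq]
  simp only [partialLaplacianCLM, Finset.sum_mul, h, Finset.sum_add_distrib, Finset.mul_sum,
    Finset.sum_ite_eq, Finset.mem_filter, Finset.mem_univ, true_and, if_pos hp]

end Coordinates

section Bridge

variable {n : ℕ}

theorem pd_coe (q : Fin n) (f : 𝓢(Fin n → ℝ, ℂ)) : pd q ⇑f = ⇑(partialDerivCLM q f) := rfl

theorem lapP_coe (f : 𝓢(Fin n → ℝ, ℂ)) : lapP ⇑f = ⇑(partialLaplacianCLM n f) := by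
  ext x
  simp [lapP, partialLaplacianCLM, sum_apply, mul_apply_eq_comp, pd_coe]

theorem pdLast_coe {q : Fin n} (hq : (q : ℕ) = n - 1) (f : 𝓢(Fin n → ℝ, ℂ)) :
    pdLast ⇑f = ⇑(partialDerivCLM q f) := by
  rw [pdLast, dif_pos q.pos, pd_coe]
  congr
  exact hq.symm

theorem pdLast_iterate_coe {q : Fin n} (hq : (q : ℕ) = n - 1) (m : ℕ) (f : 𝓢(Fin n → ℝ, ℂ)) :
    pdLast^[m] ⇑f = ⇑((partialDerivCLM q ^ m) f) := by
  induction m generalizing f with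
  | zero => rfl
  | succ m ih => rw [Function.iterate_succ_apply, pdLast_coe hq, ih, pow_succ, mul_apply_eq_comp]

theorem lapP_iterate_coe (k : ℕ) (f : 𝓢(Fin n → ℝ, ℂ)) :
    lapP^[k] ⇑f = ⇑((partialLaplacianCLM n ^ k) f) := by
  induction k generalizing f with
  | zero => rfl
  | succ k ih => rw [Function.iterate_succ_apply, lapP_coe, ih, pow_succ, mul_apply_eq_comp]

end Bridge

section Jets

variable {n : ℕ}

noncomputable def jetAtZero (q : Fin n) (f : 𝓢(Fin n → ℝ, ℂ)) (m k : ℕ) : ℂ :=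
  ((partialDerivCLM q ^ m * partialLaplacianCLM n ^ k) f) 0

theorem apply_coordSMulCLM_apply_zero {p : Fin n} {A : 𝓢(Fin n → ℝ, ℂ) →L[ℂ] 𝓢(Fin n → ℝ, ℂ)}
    (hA : Commute A (coordSMulCLM p)) (g : 𝓢(Fin n → ℝ, ℂ)) : A (coordSMulCLM p g) 0 = 0 := by
  rw [← mul_apply_eq_comp, hA.eq, mul_apply_eq_comp, coordSMulCLM_apply_apply]
  simp

theorem jetAtZero_coordSMulCLM_sq {q p : Fin n} (hqp : q ≠ p) (hp : (p : ℕ) < n - 1)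
    (f : 𝓢(Fin n → ℝ, ℂ)) (m k : ℕ) :
    jetAtZero q ((coordSMulCLM p ^ 2) f) m k
      = (2 * k : ℕ) * jetAtZero q f m (k - 1)
        + (4 * k * (k - 1) : ℕ) * jetAtZero q ((partialDerivCLM p ^ 2) f) m (k - 2) := by
  have hA : Commute (partialDerivCLM q ^ m) (coordSMulCLM p) :=
    (commute_partialDerivCLM_coordSMulCLM hqp).pow_left m
  rw [jetAtZero, ← mul_apply_eq_comp, mul_assoc, pow_mul_sq_eq_of_commutators
    (partialDerivCLM_mul_coordSMulCLM_self p)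
    (partialLaplacianCLM_mul_coordSMulCLM hp) (commute_partialLaplacianCLM_partialDerivCLM p) k,
    sq (coordSMulCLM p)]
  simp only [jetAtZero, mul_add, add_apply, nsmul_eq_mul, mul_apply_eq_comp, natCast_apply,
    map_nsmul, smul_apply, apply_coordSMulCLM_apply_zero hA, smul_zero, zero_add]

end Jets

section Gegenbauer

theorem prod_Ico_add_add_eq {α β : ℂ} {c : ℕ} (h : β + c = α) (a b : ℕ) :
    ∏ m ∈ Finset.Ico (a + c) (b + c), (β + (m : ℂ)) = ∏ m ∈ Finset.Ico a b, (α + (m : ℂ)) := by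
  rw [← Finset.prod_Ico_add', ← h]
  exact Finset.prod_congr rfl fun m _ => by push_cast; ring

theorem gegenCoeff_sub_one_add_two (α : ℂ) {L j : ℕ} (hj : 2 * j ≤ L) :
    -((j : ℂ) + 1) * gegenCoeff (α - 1) (L + 2) (j + 1) = gegenCoeff α L j := by
  unfold gegenCoeff
  rw [show (L + 2 + 1) / 2 = (L + 1) / 2 + 1 by omega, show L + 2 - (j + 1) = L - j + 1 by omega,
    show L + 2 - 2 * (j + 1) = L - 2 * j by omega, prod_Ico_add_add_eq (by push_cast; ring),
    Nat.factorial_succ]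
  push_cast
  field_simp
  ring

theorem gegenCoeff_sub_one_add_four (α : ℂ) {L j : ℕ} (hj : 2 * j ≤ L) :
    ((j : ℂ) + 1) * ((j : ℂ) + 2) * gegenCoeff (α - 1) (L + 4) (j + 2)
      = gegenCoeff (α + 1) L j := by
  unfold gegenCoeff
  rw [show (L + 4 + 1) / 2 = (L + 1) / 2 + 2 by omega, show L + 4 - (j + 2) = L - j + 2 by omega,
    show L + 4 - 2 * (j + 2) = L - 2 * j by omega,
    prod_Ico_add_add_eq (α := α + 1) (by push_cast; ring),
    Nat.factorial_succ, Nat.factorial_succ]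
  push_cast
  rw [show (j : ℂ) + 1 + 1 = j + 2 by ring]
  have hj2 : (j : ℂ) + 2 ≠ 0 := by exact_mod_cast (j + 1).succ_ne_zero
  field_simp
  ring

noncomputable def gegenSum (α : ℂ) (l : ℤ) (a : ℕ → ℕ → ℂ) : ℂ :=
  if 0 ≤ l then
    ∑ k ∈ Finset.range (l.toNat / 2 + 1),
      gegenCoeff α l.toNat k * ((-1 : ℂ) ^ k * ((-1 : ℂ) ^ (l.toNat - 2 * k) * a (l.toNat - 2 * k) k))
  else 0

theorem gegenSum_natCast (α : ℂ) (L : ℕ) (a : ℕ → ℕ → ℂ) :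
    gegenSum α L a = ∑ k ∈ Finset.range (L / 2 + 1),
      gegenCoeff α L k * ((-1 : ℂ) ^ k * ((-1 : ℂ) ^ (L - 2 * k) * a (L - 2 * k) k)) := by
  simp [gegenSum]

theorem gegenSum_add (α : ℂ) (l : ℤ) (a b : ℕ → ℕ → ℂ) :
    gegenSum α l (fun m k => a m k + b m k) = gegenSum α l a + gegenSum α l b := by
  unfold gegenSum
  split_ifs
  · rw [← Finset.sum_add_distrib]
    exact Finset.sum_congr rfl fun k _ => by ring
  · simp

theorem gegenSum_shift_one (α : ℂ) {l : ℤ} (hl : 0 ≤ l) (a : ℕ → ℕ → ℂ) :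
    gegenSum (α - 1) (l + 2) (fun m k => (2 * k : ℕ) * a m (k - 1)) = 2 * gegenSum α l a := by
  lift l to ℕ using hl
  rw [show (l : ℤ) + 2 = (l + 2 : ℕ) by push_cast; ring, gegenSum_natCast, gegenSum_natCast,
    show (l + 2) / 2 + 1 = l / 2 + 1 + 1 by omega, Finset.sum_range_succ', Finset.mul_sum]
  simp only [mul_zero, Nat.cast_zero, zero_mul, add_zero]
  refine Finset.sum_congr rfl fun j hj => ?_
  rw [show l + 2 - 2 * (j + 1) = l - 2 * j by omega, Nat.add_sub_cancel,
    ← gegenCoeff_sub_one_add_two α (by have := Finset.mem_range.1 hj; omega)]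
  push_cast
  ring

theorem gegenSum_shift_two (α : ℂ) {l : ℤ} (hl : 0 ≤ l) (b : ℕ → ℕ → ℂ) :
    gegenSum (α - 1) (l + 2) (fun m k => (4 * k * (k - 1) : ℕ) * b m (k - 2))
      = 4 * gegenSum (α + 1) (l - 2) b := by
  lift l to ℕ using hl
  rw [show (l : ℤ) + 2 = (l + 2 : ℕ) by push_cast; ring, gegenSum_natCast]
  rcases lt_or_ge l 2 with hl | hl
  · rw [gegenSum, if_neg (by omega), mul_zero, show (l + 2) / 2 + 1 = 2 by omega]
    simp [Finset.sum_range_succ]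
  · obtain ⟨L, rfl⟩ := Nat.exists_eq_add_of_le' hl
    rw [show ((L + 2 : ℕ) : ℤ) - 2 = L by push_cast; ring, gegenSum_natCast,
      show (L + 2 + 2) / 2 + 1 = L / 2 + 1 + 1 + 1 by omega, Finset.sum_range_succ',
      Finset.sum_range_succ', Finset.mul_sum]
    simp only [mul_zero, Nat.cast_zero, zero_mul, add_zero, zero_add, mul_one, Nat.sub_self]
    refine Finset.sum_congr rfl fun j hj => ?_
    rw [show L + 2 + 2 - 2 * (j + 1 + 1) = L - 2 * j by omega, show j + 1 + 1 - 2 = j by omega,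
      ← gegenCoeff_sub_one_add_four α (by have := Finset.mem_range.1 hj; omega)]
    push_cast
    ring

end Gegenbauer

theorem Kact_coe_eq_gegenSum {n : ℕ} {q : Fin n} (hq : (q : ℕ) = n - 1) (lam : ℂ) (l : ℤ)
    (f : 𝓢(Fin n → ℝ, ℂ)) :
    Kact n lam l ⇑f = gegenSum (lam - ((n : ℂ) - 1) / 2) l (jetAtZero q f) := by
  change gegenSum _ l (fun m k => pdLast^[m] (lapP^[k] ⇑f) 0) = _
  simp only [lapP_iterate_coe, pdLast_iterate_coe hq]
  rfl

theorem stmt14_general (n : ℕ) (lam : ℂ) (l : ℤ) (hl : 0 ≤ l)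
    (p : Fin n) (hp : (p : ℕ) < n - 1)
    (φ : SchwartzMap (Fin n → ℝ) ℂ) :
    Kact n (lam - 1) (l + 2) (fun x => (((x p) ^ 2 : ℝ) : ℂ) * φ x)
      = 4 * Kact n (lam + 1) (l - 2) (pd p (pd p ⇑φ)) + 2 * Kact n lam l ⇑φ := by
  set q : Fin n := ⟨n - 1, by omega⟩
  have hqp : q ≠ p := fun h => by simp [Fin.ext_iff, q] at h; omega
  have hX : (fun x => (((x p) ^ 2 : ℝ) : ℂ) * φ x) = ⇑((coordSMulCLM p ^ 2) φ) := by
    ext x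
    simp [sq, mul_apply_eq_comp, coordSMulCLM_apply_apply, mul_assoc]
  rw [hX, pd_coe, pd_coe, ← mul_apply_eq_comp, ← sq]
  simp only [Kact_coe_eq_gegenSum (q := q) rfl]
  rw [funext₂ (jetAtZero_coordSMulCLM_sq hqp hp φ), gegenSum_add,
    show lam - 1 - ((n : ℂ) - 1) / 2 = lam - ((n : ℂ) - 1) / 2 - 1 by ring,
    show lam + 1 - ((n : ℂ) - 1) / 2 = lam - ((n : ℂ) - 1) / 2 + 1 by ring,
    gegenSum_shift_one _ hl, gegenSum_shift_two _ hl]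
  ring

/-- `x_p²·𝒦_{λ−1,ν+1} = 4 ∂_p² 𝒦_{λ+1,ν−1} + 2 𝒦_{λ,ν}` as tempered distributions on ℝ^n,
tested against an arbitrary Schwartz function `φ`; `(∂_p² T)(φ) = T(∂_p² φ)`. -/
theorem stmt14 (n : ℕ) (hn : 2 ≤ n) (lam nu : ℂ) (l : ℤ) (hl : 0 ≤ l)
    (hln : nu - lam = (l : ℂ)) (p : Fin n) (hp : (p : ℕ) < n - 1)
    (φ : SchwartzMap (Fin n → ℝ) ℂ) :
    Kact n (lam - 1) (l + 2) (fun x => (((x p) ^ 2 : ℝ) : ℂ) * φ x)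
      = 4 * Kact n (lam + 1) (l - 2) (pd p (pd p ⇑φ)) + 2 * Kact n lam l ⇑φ :=
  stmt14_general n lam l hl p hp φ
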